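/- arXiv:1906.09440 — 6 statements merged into one kernel-verified Lean document; each statement's English description precedes it below -/
import Mathlib

section
/- Let p be an odd prime and μ ≥ 1. Every m×m matrix over Z/p^μ can be written as a sum of two invertible m×m matrices over Z/p^μ. -/
/-!
Over a local ring in which `2` is a unit, every `a` is a sum of two units: `a = 1 + (a - 1)`
unless `a - 1` lies in the maximal ideal, and then `a = 2 + (a - 2)`, where `a - 2 = (a - 1) - 1`
is a unit. `ZMod (p ^ μ)` is such a ring for odd `p`. A matrix `A` is then split as `B + (A - B)`,
where `B` is the strictly lower triangular part of `A` plus a diagonal of units `u i` chosen with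
`A i i - u i` a unit: `B` is lower and `A - B` upper triangular, both with unit diagonals.
-/

theorem IsLocalRing.exists_isUnit_isUnit_sub {R : Type*} [CommRing R] [IsLocalRing R]
    (h2 : IsUnit (2 : R)) (a : R) : ∃ u : R, IsUnit u ∧ IsUnit (a - u) := by
  by_cases h1 : IsUnit (a - 1)
  · exact ⟨1, isUnit_one, h1⟩
  · refine ⟨2, h2, ?_⟩
    have hsum : (a - 2) + -(a - 1) = -1 := by ring
    have := isUnit_or_isUnit_of_isUnit_add (hsum ▸ isUnit_one.neg)
    exact this.resolve_right (by rwa [IsUnit.neg_iff])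

theorem ZMod.isLocalRing_prime_pow {p μ : ℕ} (hp : p.Prime) (hμ : 0 < μ) :
    IsLocalRing (ZMod (p ^ μ)) := by
  have : Fact (1 < p ^ μ) := ⟨Nat.one_lt_pow hμ.ne' hp.one_lt⟩
  have hnonunit (a : ZMod (p ^ μ)) : a ∈ nonunits _ ↔ p ∣ a.val := by
    rw [mem_nonunits_iff, ← ZMod.natCast_zmod_val a, ZMod.isUnit_natCast_iff_not_dvd_pow hp hμ,
      not_not, ZMod.natCast_zmod_val]
  refine IsLocalRing.of_nonunits_add fun a b ha hb ↦ ?_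
  rw [hnonunit] at ha hb ⊢
  rw [ZMod.val_add, Nat.dvd_mod_iff (dvd_pow_self p hμ.ne')]
  exact dvd_add ha hb

theorem ZMod.isUnit_two_prime_pow {p μ : ℕ} (hp : p.Prime) (hp2 : p ≠ 2) :
    IsUnit (2 : ZMod (p ^ μ)) := by
  have h2 : ¬ 2 ∣ p ^ μ := fun h ↦
    hp2 ((Nat.prime_dvd_prime_iff_eq Nat.prime_two hp).mp (Nat.prime_two.dvd_of_dvd_pow h)).symm
  exact_mod_cast ZMod.isUnit_prime_of_not_dvd Nat.prime_two h2

namespace Matrix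

variable {ι R : Type*} [Fintype ι] [DecidableEq ι] [LinearOrder ι] [CommRing R]

theorem IsUpperTriangular.isUnit {M : Matrix ι ι R} (hM : M.IsUpperTriangular)
    (hdiag : ∀ i, IsUnit (M i i)) : IsUnit M := by
  rw [isUnit_iff_isUnit_det, det_of_isUpperTriangular hM]
  exact IsUnit.prod_univ_iff.mpr hdiag

theorem IsLowerTriangular.isUnit {M : Matrix ι ι R} (hM : M.IsLowerTriangular)
    (hdiag : ∀ i, IsUnit (M i i)) : IsUnit M := by
  rw [isUnit_iff_isUnit_det, det_of_isLowerTriangular M hM]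
  exact IsUnit.prod_univ_iff.mpr hdiag

theorem exists_isUnit_isUnit_sub (h : ∀ a : R, ∃ u : R, IsUnit u ∧ IsUnit (a - u))
    (A : Matrix ι ι R) : ∃ B : Matrix ι ι R, IsUnit B ∧ IsUnit (A - B) := by
  choose u hu hsub using h
  let B : Matrix ι ι R := of fun i j ↦ if j < i then A i j else if i = j then u (A i i) else 0
  refine ⟨B, IsLowerTriangular.isUnit ?_ fun i ↦ ?_, IsUpperTriangular.isUnit ?_ fun i ↦ ?_⟩
  · intro i j hij
    have hij : i < j := hij
    simp [B, hij.not_gt, hij.ne]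
  · simpa [B] using hu (A i i)
  · intro i j hij
    have hij : j < i := hij
    simp [B, hij]
  · simpa [B] using hsub (A i i)

end Matrix

theorem stmt6 {p : ℕ} (hp : p.Prime) (hp2 : p ≠ 2) {μ : ℕ} (hμ : 1 ≤ μ) {m : ℕ}
    (A : Matrix (Fin m) (Fin m) (ZMod (p ^ μ))) :
    ∃ B C : Matrix (Fin m) (Fin m) (ZMod (p ^ μ)),
      IsUnit B ∧ IsUnit C ∧ A = B + C := by
  have := ZMod.isLocalRing_prime_pow hp hμ
  obtain ⟨B, hB, hC⟩ := Matrix.exists_isUnit_isUnit_sub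
    (IsLocalRing.exists_isUnit_isUnit_sub (ZMod.isUnit_two_prime_pow hp hp2)) A
  exact ⟨B, A - B, hB, hC, (add_sub_cancel B A).symm⟩
end

section
/- For any m×m matrix a over Z/p^μ there exist an invertible matrix ζ ∈ GL(m, Z/p^μ) and a positive integer N such that (ζ a ζ^{-1})^N is a block-diagonal idempotent of the form diag(0, 1_k), where k is the rank of the reduction a^m (mod p). -/
open Matrix Module

-- Lemma A: idempotent power in a finite monoid, with exponent ≥ m
lemma aux_exists_idem_pow {M : Type*} [Monoid M] [Finite M] (a : M) (m : ℕ) :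
    ∃ N, m ≤ N ∧ 0 < N ∧ a ^ N * a ^ N = a ^ N := by
  obtain ⟨i, j, hij, h⟩ := Finite.exists_ne_map_eq_of_infinite (fun n : ℕ => a ^ n)
  wlog hlt : i < j generalizing i j
  · exact this j i hij.symm h.symm (by omega)
  set d := j - i with hd
  have hd0 : 0 < d := by omega
  have key : ∀ n, i ≤ n → a ^ (n + d) = a ^ n := by
    intro n hn
    have h1 : n + d = (n - i) + j := by omega
    have h2 : (n - i) + i = n := by omega
    rw [h1, pow_add, ← h, ← pow_add, h2]
  have key2 : ∀ t n, i ≤ n → a ^ (n + t * d) = a ^ n := by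
    intro t
    induction t with
    | zero => simp
    | succ t ih =>
      intro n hn
      have h1 : n + (t + 1) * d = (n + d) + t * d := by ring
      rw [h1, ih _ (by omega), key n hn]
  refine ⟨d * (i + m + 1), ?_, ?_, ?_⟩
  · nlinarith
  · positivity
  · rw [← pow_add]
    have h1 : d * (i + m + 1) + d * (i + m + 1) = d * (i + m + 1) + (i + m + 1) * d := by ring
    rw [h1, key2 _ _ (by nlinarith)]

-- mulVecLin of a power
lemma aux_mulVecLin_pow {R : Type*} [CommRing R] {m : ℕ} (A : Matrix (Fin m) (Fin m) R) (n : ℕ) :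
    (A ^ n).mulVecLin = (A.mulVecLin) ^ n := by
  induction n with
  | zero => simp only [pow_zero, Matrix.mulVecLin_one]; rfl
  | succ n ih => rw [pow_succ, pow_succ, Matrix.mulVecLin_mul, ih]; rfl

-- Lemma: rank of powers stabilizes over a field
lemma aux_rank_pow_stab {K : Type*} [Field K] {m : ℕ} (A : Matrix (Fin m) (Fin m) K) {N : ℕ}
    (hN : m ≤ N) : (A ^ N).rank = (A ^ m).rank := by
  have hfin : Module.finrank K (Fin m → K) = m := by simp [Module.finrank_pi]
  have hker : ∀ n : ℕ, m ≤ n →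
      LinearMap.ker (A.mulVecLin ^ n) = LinearMap.ker (A.mulVecLin ^ m) := by
    intro n hn
    rw [Module.End.ker_pow_eq_ker_pow_finrank_of_le (hfin.le.trans hn),
      Module.End.ker_pow_eq_ker_pow_finrank_of_le (hfin.le.trans le_rfl)]
  have hrk : ∀ n : ℕ, (A ^ n).rank + Module.finrank K ↥(LinearMap.ker (A.mulVecLin ^ n)) = m := by
    intro n
    rw [Matrix.rank, aux_mulVecLin_pow]
    conv_rhs => rw [← hfin]
    exact LinearMap.finrank_range_add_finrank_ker _
  have h1 := hrk N
  have h2 := hrk m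
  rw [hker N hN] at h1
  omega

lemma aux_zmod_local {p : ℕ} (hp : p.Prime) {μ : ℕ} (hμ : 1 ≤ μ) :
    IsLocalRing (ZMod (p ^ μ)) := by
  haveI : Fact (1 < p ^ μ) := ⟨Nat.one_lt_pow (by omega) hp.one_lt⟩
  haveI : NeZero (p ^ μ) := ⟨(pow_pos hp.pos μ).ne'⟩
  have key : ∀ x : ZMod (p ^ μ), ¬ p ∣ x.val → IsUnit x := by
    intro x hx
    have hc : Nat.Coprime x.val (p ^ μ) :=
      Nat.Coprime.pow_right μ ((Nat.Prime.coprime_iff_not_dvd hp).mpr hx).symm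
    have := (ZMod.isUnit_iff_coprime x.val (p ^ μ)).mpr hc
    rwa [ZMod.natCast_val, ZMod.cast_id] at this
  apply IsLocalRing.of_isUnit_or_isUnit_one_sub_self
  intro x
  by_cases hx : p ∣ x.val
  · right
    apply key
    intro hy
    haveI : NeZero p := ⟨hp.ne_zero⟩
    have φ := ZMod.castHom (dvd_pow_self p (by omega : μ ≠ 0)) (ZMod p)
    have h1 : ((x.val : ZMod p)) = 0 := (ZMod.natCast_eq_zero_iff _ _).mpr hx
    have h2 : (((1 - x).val : ZMod p)) = 0 := (ZMod.natCast_eq_zero_iff _ _).mpr hy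
    have h3 : (ZMod.castHom (dvd_pow_self p (by omega : μ ≠ 0)) (ZMod p)) x
        + (ZMod.castHom (dvd_pow_self p (by omega : μ ≠ 0)) (ZMod p)) (1 - x) = 1 := by
      rw [← map_add, show x + (1 - x) = (1 : ZMod (p ^ μ)) by ring]
      exact _root_.map_one _
    rw [ZMod.castHom_apply, ZMod.castHom_apply, ← ZMod.natCast_val, ← ZMod.natCast_val,
      h1, h2] at h3
    haveI : Fact p.Prime := ⟨hp⟩
    simp at h3
  · left; exact key x hx


set_option synthInstance.maxHeartbeats 1000000
set_option maxHeartbeats 1000000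

-- range of an idempotent endomorphism of R^m is finite free
lemma aux_range_free {R : Type*} [CommRing R] [IsLocalRing R] [Finite R] {m : ℕ}
    (g : (Fin m → R) →ₗ[R] (Fin m → R)) (hg : ∀ x, g (g x) = g x) :
    Module.Free R ↥(LinearMap.range g) := by
  haveI : Module.Finite R ↥(LinearMap.range g) := Module.Finite.of_finite
  haveI : Module.Projective R ↥(LinearMap.range g) := by
    refine Module.Projective.of_split (LinearMap.range g).subtype
      (g.codRestrict (LinearMap.range g) (fun x => LinearMap.mem_range_self g x)) ?_
    ext ⟨x, hx⟩
    obtain ⟨y, rfl⟩ := hx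
    simp [LinearMap.codRestrict, hg]
  haveI : Module.FinitePresentation R ↥(LinearMap.range g) :=
    Module.finitePresentation_of_projective R _
  exact Module.free_of_flat_of_isLocalRing

lemma aux_idem_conj {R : Type*} [CommRing R] [IsLocalRing R] [Finite R] [Nontrivial R] {m : ℕ}
    (e : Matrix (Fin m) (Fin m) R) (he : e * e = e) :
    ∃ (ζ : Matrix (Fin m) (Fin m) R) (k : ℕ), IsUnit ζ ∧ k ≤ m ∧
      ζ * e * ζ⁻¹ = Matrix.of (fun i j : Fin m =>
        if i = j ∧ m - k ≤ (i : ℕ) then 1 else 0) := by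
  classical
  set f := Matrix.toLin' e with hfdef
  have hcomp : f.comp f = f := by
    rw [hfdef, ← Matrix.toLin'_mul, he]
  have hfx : ∀ x, f (f x) = f x := fun x => congrFun (congrArg DFunLike.coe hcomp) x
  -- complement
  have hcompl : IsCompl (LinearMap.ker f) (LinearMap.range f) := by
    constructor
    · rw [Submodule.disjoint_def]
      rintro x hxk ⟨y, rfl⟩
      rw [LinearMap.mem_ker] at hxk
      rw [← hfx y, hxk]
    · rw [codisjoint_iff, eq_top_iff]
      rintro x -
      refine Submodule.mem_sup.mpr ⟨x - f x, ?_, f x, ⟨x, rfl⟩, by abel⟩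
      rw [LinearMap.mem_ker, map_sub, hfx, sub_self]
  -- ker f = range (1 - f)
  have hker : LinearMap.ker f = LinearMap.range (LinearMap.id - f) := by
    ext x
    constructor
    · intro hx
      rw [LinearMap.mem_ker] at hx
      exact ⟨x, by simp [hx]⟩
    · rintro ⟨y, rfl⟩
      rw [LinearMap.mem_ker]
      simp [map_sub, hfx]
  haveI hW : Module.Free R ↥(LinearMap.range f) := aux_range_free f hfx
  haveI hK : Module.Free R ↥(LinearMap.ker f) := by
    rw [hker]
    refine aux_range_free _ (fun x => ?_)
    simp [map_sub, hfx]
  haveI : Module.Finite R ↥(LinearMap.range f) := Module.Finite.of_finite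
  haveI : Module.Finite R ↥(LinearMap.ker f) := Module.Finite.of_finite
  -- bases
  set bK := (Module.Free.chooseBasis R ↥(LinearMap.ker f)).reindex
    (Fintype.equivFin _) with hbK
  set bW := (Module.Free.chooseBasis R ↥(LinearMap.range f)).reindex
    (Fintype.equivFin _) with hbW
  set r := Fintype.card (Module.Free.ChooseBasisIndex R ↥(LinearMap.ker f)) with hr
  set k := Fintype.card (Module.Free.ChooseBasisIndex R ↥(LinearMap.range f)) with hk
  set Eq := Submodule.prodEquivOfIsCompl _ _ hcompl with hEq
  set b0 : Basis (Fin r ⊕ Fin k) R (Fin m → R) := (bK.prod bW).map Eq with hb0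
  have hrk : r + k = m := by
    have h1 := Module.finrank_eq_card_basis b0
    simp [Module.finrank_pi] at h1
    omega
  set σ : (Fin r ⊕ Fin k) ≃ Fin m := finSumFinEquiv.trans (finCongr hrk) with hσ
  set b := b0.reindex σ with hb
  -- values of b0
  have hb0l : ∀ x : Fin r, (b0 (Sum.inl x) : Fin m → R) = (bK x : Fin m → R) := by
    intro x
    rw [hb0, Basis.map_apply]
    have : (bK.prod bW) (Sum.inl x) = (bK x, 0) :=
      Prod.ext (Basis.prod_apply_inl_fst _ _ _) (Basis.prod_apply_inl_snd _ _ _)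
    rw [this, hEq, Submodule.coe_prodEquivOfIsCompl']
    simp
  have hb0r : ∀ y : Fin k, (b0 (Sum.inr y) : Fin m → R) = (bW y : Fin m → R) := by
    intro y
    rw [hb0, Basis.map_apply]
    have : (bK.prod bW) (Sum.inr y) = (0, bW y) :=
      Prod.ext (Basis.prod_apply_inr_fst _ _ _) (Basis.prod_apply_inr_snd _ _ _)
    rw [this, hEq, Submodule.coe_prodEquivOfIsCompl']
    simp
  -- matrix of f in basis b
  have hEm : LinearMap.toMatrix b b f = Matrix.of (fun i j : Fin m =>
      if i = j ∧ m - k ≤ (i : ℕ) then 1 else 0) := by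
    ext i j
    rw [LinearMap.toMatrix_apply, Matrix.of_apply]
    rw [hb, Basis.coe_reindex]
    rcases hsj : σ.symm j with x | y
    · -- b j in kernel
      have h0 : f (b0 (Sum.inl x)) = 0 := by
        have : (b0 (Sum.inl x) : Fin m → R) ∈ LinearMap.ker f := by
          rw [hb0l x]; exact (bK x).2
        rwa [LinearMap.mem_ker] at this
      rw [Function.comp_apply, hsj, h0, map_zero, Finsupp.coe_zero, Pi.zero_apply]
      have hjlt : (j : ℕ) < r := by
        have : j = σ (Sum.inl x) := by rw [← hsj, Equiv.apply_symm_apply]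
        rw [this, hσ]
        simp [finSumFinEquiv]
        all_goals omega
      rw [if_neg]
      rintro ⟨rfl, hle⟩
      omega
    · -- b j in range
      have h0 : f (b0 (Sum.inr y)) = b0 (Sum.inr y) := by
        have hmem : (b0 (Sum.inr y) : Fin m → R) ∈ LinearMap.range f := by
          rw [hb0r y]; exact (bW y).2
        obtain ⟨z, hz⟩ := hmem
        rw [← hz, hfx]
      rw [Function.comp_apply, hsj, h0]
      have : (b0 ∘ σ.symm) j = b0 (Sum.inr y) := by rw [Function.comp_apply, hsj]
      rw [← this, ← Basis.coe_reindex, ← hb, Basis.repr_self]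
      have hjge : m - k ≤ (j : ℕ) := by
        have : j = σ (Sum.inr y) := by rw [← hsj, Equiv.apply_symm_apply]
        rw [this, hσ]
        simp [finSumFinEquiv]
        all_goals omega
      rw [Finsupp.single_apply]
      by_cases hij : i = j
      · subst hij
        rw [if_pos rfl, if_pos ⟨rfl, hjge⟩]
      · rw [if_neg (fun h => hij h.symm), if_neg (fun h => hij h.1)]
  -- change of basis
  set s : Basis (Fin m) R (Fin m → R) := Pi.basisFun R (Fin m) with hs
  have hcb := basis_toMatrix_mul_linearMap_toMatrix_mul_basis_toMatrix s b s b f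
  have hse : LinearMap.toMatrix s s f = e := by
    rw [hs, LinearMap.toMatrix_eq_toMatrix', hfdef, LinearMap.toMatrix'_toLin']
  set P := s.toMatrix b with hP
  set Q := b.toMatrix s with hQ
  have hPQ : P * Q = 1 := Basis.toMatrix_mul_toMatrix_flip _ _
  have hQP : Q * P = 1 := Basis.toMatrix_mul_toMatrix_flip _ _
  rw [hse, hEm] at hcb
  refine ⟨Q, k, ⟨⟨Q, P, hQP, hPQ⟩, rfl⟩, by omega, ?_⟩
  have hQinv : Q⁻¹ = P := Matrix.inv_eq_right_inv hQP
  rw [hQinv, ← hcb]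
  calc Q * (P * Matrix.of (fun i j : Fin m => if i = j ∧ m - k ≤ (i : ℕ) then 1 else 0) * Q) * P
      = (Q * P) * Matrix.of (fun i j : Fin m => if i = j ∧ m - k ≤ (i : ℕ) then 1 else 0)
        * (Q * P) := by noncomm_ring
    _ = _ := by rw [hQP, one_mul, mul_one]
theorem stmt10 {p : ℕ} (hp : p.Prime) {μ : ℕ} (hμ : 1 ≤ μ) {m : ℕ}
    (a : Matrix (Fin m) (Fin m) (ZMod (p ^ μ))) :
    ∃ (ζ : Matrix (Fin m) (Fin m) (ZMod (p ^ μ))) (N : ℕ), IsUnit ζ ∧ 0 < N ∧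
      (ζ * a * ζ⁻¹) ^ N = Matrix.of (fun i j : Fin m =>
        if i = j ∧
            m - ((a ^ m).map (ZMod.castHom (dvd_pow_self p (by omega : μ ≠ 0)) (ZMod p))).rank
              ≤ (i : ℕ)
        then 1 else 0) := by
  classical
  haveI : Fact p.Prime := ⟨hp⟩
  haveI : Fact (1 < p ^ μ) := ⟨Nat.one_lt_pow (by omega) hp.one_lt⟩
  haveI : NeZero (p ^ μ) := ⟨(pow_pos hp.pos μ).ne'⟩
  haveI : IsLocalRing (ZMod (p ^ μ)) := aux_zmod_local hp hμ
  rcases Nat.eq_zero_or_pos m with hm | hm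
  · refine ⟨1, 1, isUnit_one, one_pos, ?_⟩
    subst hm
    ext i j
    exact i.elim0
  obtain ⟨N, hmN, hN0, hidem⟩ := aux_exists_idem_pow a m
  obtain ⟨ζ, k, hζ, hkm, hconj⟩ := aux_idem_conj (a ^ N) hidem
  set φ := ZMod.castHom (dvd_pow_self p (by omega : μ ≠ 0)) (ZMod p) with hφ
  set Φ : Matrix (Fin m) (Fin m) (ZMod (p ^ μ)) →+* Matrix (Fin m) (Fin m) (ZMod p) :=
    φ.mapMatrix with hΦ
  obtain ⟨u, hu⟩ := hζ
  -- conjugation-invariance of rank over the field ZMod p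
  have hrank_conj : ∀ (B : Matrix (Fin m) (Fin m) (ZMod p))
      (w : (Matrix (Fin m) (Fin m) (ZMod p))ˣ),
      ((w : Matrix (Fin m) (Fin m) (ZMod p)) * B * (↑w⁻¹ : Matrix (Fin m) (Fin m) (ZMod p))).rank
        = B.rank := by
    intro B w
    apply le_antisymm
    · exact (Matrix.rank_mul_le_left _ _).trans (Matrix.rank_mul_le_right _ _)
    · have hB : (↑w⁻¹ : Matrix (Fin m) (Fin m) (ZMod p)) *
          ((↑w : Matrix (Fin m) (Fin m) (ZMod p)) * B
            * (↑w⁻¹ : Matrix (Fin m) (Fin m) (ZMod p)))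
          * (↑w : Matrix (Fin m) (Fin m) (ZMod p)) = B := by
        simp only [mul_assoc, Units.inv_mul_cancel_left, Units.inv_mul, mul_one]
      conv_lhs => rw [← hB]
      exact (Matrix.rank_mul_le_left _ _).trans (Matrix.rank_mul_le_right _ _)
  -- compute k
  have hk : k = ((a ^ m).map φ).rank := by
    set w := Units.map Φ.toMonoidHom u with hw
    have hmap := congrArg Φ hconj
    have hζinv : ζ⁻¹ = (↑u⁻¹ : Matrix (Fin m) (Fin m) (ZMod (p ^ μ))) := by
      rw [← hu]; exact (Matrix.coe_units_inv u).symm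
    rw [_root_.map_mul, _root_.map_mul, hζinv, ← hu] at hmap
    have h1 : Φ (↑u : Matrix (Fin m) (Fin m) (ZMod (p ^ μ))) = ↑w := by
      rw [hw, Units.coe_map]; rfl
    have h2 : Φ (↑u⁻¹ : Matrix (Fin m) (Fin m) (ZMod (p ^ μ)))
        = (↑w⁻¹ : Matrix (Fin m) (Fin m) (ZMod p)) := by
      rw [hw, ← map_inv (Units.map Φ.toMonoidHom) u, Units.coe_map]; rfl
    rw [h1, h2] at hmap
    have h3 : ((↑w : Matrix (Fin m) (Fin m) (ZMod p)) * Φ (a ^ N)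
        * (↑w⁻¹ : Matrix (Fin m) (Fin m) (ZMod p))).rank
        = (Φ (a ^ N)).rank := hrank_conj _ w
    rw [hmap] at h3
    have h4 : Φ (a ^ N) = (Φ a) ^ N := map_pow Φ a N
    have h5 : ((Φ a) ^ N).rank = ((Φ a) ^ m).rank := aux_rank_pow_stab (Φ a) hmN
    have h6 : (Φ a) ^ m = Φ (a ^ m) := (map_pow Φ a m).symm
    -- rank of the 0/1 diagonal matrix
    have hmapEm : Φ (Matrix.of (fun i j : Fin m =>
        if i = j ∧ m - k ≤ (i : ℕ) then (1 : ZMod (p ^ μ)) else 0))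
        = Matrix.diagonal (fun i : Fin m => if m - k ≤ (i : ℕ) then (1 : ZMod p) else 0) := by
      ext i j
      rw [hΦ, RingHom.mapMatrix_apply, Matrix.map_apply, Matrix.of_apply, Matrix.diagonal_apply]
      by_cases hij : i = j
      · subst hij; by_cases hle : m - k ≤ (i : ℕ) <;> simp [hle]
      · simp [hij]
    have hcard : Fintype.card {i : Fin m //
        ¬ (if m - k ≤ (i : ℕ) then (1 : ZMod p) else 0) = 0} = k := by
      have hiff : ∀ i : Fin m,
          (¬ (if m - k ≤ (i : ℕ) then (1 : ZMod p) else 0) = 0) ↔ (m - k ≤ (i : ℕ)) := by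
        intro i; split_ifs with h <;> simp [h]
      rw [Fintype.card_congr (Equiv.subtypeEquivRight hiff)]
      have e : {i : Fin m // m - k ≤ (i : ℕ)} ≃ Fin k :=
        { toFun := fun i => ⟨(i : ℕ) - (m - k), by
            obtain ⟨⟨iv, hiv⟩, hi⟩ := i
            simp only at hi ⊢
            omega⟩
          invFun := fun j => ⟨⟨(j : ℕ) + (m - k), by omega⟩, by simp⟩
          left_inv := by
            rintro ⟨⟨iv, hiv⟩, hi⟩
            simp only at hi ⊢
            ext
            simp only
            omega
          right_inv := by
            rintro ⟨jv, hjv⟩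
            ext
            simp only
            omega }
      rw [Fintype.card_congr e, Fintype.card_fin]
    have h7 : (Matrix.diagonal
        (fun i : Fin m => if m - k ≤ (i : ℕ) then (1 : ZMod p) else 0)).rank = k := by
      rw [Matrix.rank_diagonal]
      exact hcard
    rw [hmapEm, h7] at h3
    rw [h4, h5, h6] at h3
    rw [hΦ, RingHom.mapMatrix_apply] at h3
    exact h3
  refine ⟨ζ, N, ⟨u, hu⟩, hN0, ?_⟩
  have hpow : (ζ * a * ζ⁻¹) ^ N = ζ * a ^ N * ζ⁻¹ := by
    have hζinv : ζ⁻¹ = (↑u⁻¹ : Matrix (Fin m) (Fin m) (ZMod (p ^ μ))) := by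
      rw [← hu]; exact (Matrix.coe_units_inv u).symm
    rw [hζinv, ← hu, Units.conj_pow]
  rw [hpow, hconj, hk]
end

section
/- Let α, β, γ, δ be square matrices over Z/p^μ of appropriate sizes, p prime. Then there exists a matrix u over Z/p^μ satisfying the equation u = -β + p(-δ + αu + uγu)(1+pδ)^{-1}. -/
private def auxF {R : Type*} [CommRing R] {m : ℕ} (q : R)
    (α β γ : Matrix (Fin m) (Fin m) R) (i : Matrix (Fin m) (Fin m) R)
    (δ : Matrix (Fin m) (Fin m) R) (u : Matrix (Fin m) (Fin m) R) :
    Matrix (Fin m) (Fin m) R :=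
  -β + q • ((-δ + α * u + u * γ * u) * i)

private lemma auxF_key {R : Type*} [CommRing R] {m : ℕ} (q : R)
    (α β γ i δ : Matrix (Fin m) (Fin m) R)
    (u v d : Matrix (Fin m) (Fin m) R) (c : R) (h : u = v + c • d) :
    auxF q α β γ i δ u = auxF q α β γ i δ v
      + (q * c) • ((α * d + u * γ * d + d * γ * v) * i) := by
  simp only [auxF]
  rw [h]
  simp only [mul_add, add_mul, mul_smul_comm, smul_mul_assoc, smul_smul, smul_add]
  module

theorem stmt11 {p : ℕ} (hp : p.Prime) {μ : ℕ} (hμ : 1 ≤ μ) {m : ℕ}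
    (α β γ δ : Matrix (Fin m) (Fin m) (ZMod (p ^ μ))) :
    ∃ u : Matrix (Fin m) (Fin m) (ZMod (p ^ μ)),
      u = -β + (p : ZMod (p ^ μ)) •
        ((-δ + α * u + u * γ * u) * (1 + (p : ZMod (p ^ μ)) • δ)⁻¹) := by
  set q : ZMod (p ^ μ) := (p : ZMod (p ^ μ)) with hq
  let i := (1 + q • δ)⁻¹
  let f := auxF q α β γ i δ
  have iter : ∀ k : ℕ, ∃ d, f^[k + 1] (-β) = f^[k] (-β) + q ^ k • d := by
    intro k
    induction k with
    | zero =>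
      exact ⟨f (-β) - (-β), by simp⟩
    | succ k ih =>
      obtain ⟨d, hd⟩ := ih
      refine ⟨(α * d + f^[k+1] (-β) * γ * d + d * γ * (f^[k] (-β))) * i, ?_⟩
      rw [Function.iterate_succ_apply' f (k+1), show f = auxF q α β γ i δ from rfl,
        auxF_key q α β γ i δ _ _ _ _ hd,
        ← Function.iterate_succ_apply' (auxF q α β γ i δ) k, pow_succ']
  obtain ⟨d, hd⟩ := iter μ
  have hq0 : q ^ μ = 0 := by
    rw [hq, ← Nat.cast_pow, ZMod.natCast_self]
  refine ⟨f^[μ] (-β), ?_⟩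
  show f^[μ] (-β) = f (f^[μ] (-β))
  rw [← Function.iterate_succ_apply' f μ, hd, hq0, zero_smul, add_zero]
end

section
/- Let B be an l×N matrix over a ring R. The set of invertible l×l matrices g that can be written in the form g = 1 - BS for some N×l matrix S is a subgroup of GL(l, R). -/
theorem stmt12 {R : Type*} [Ring R] {l N : ℕ}
    (B : Matrix (Fin l) (Fin N) R) :
    ∃ H : Subgroup (Matrix (Fin l) (Fin l) R)ˣ,
      ∀ g : (Matrix (Fin l) (Fin l) R)ˣ,
        g ∈ H ↔ ∃ S : Matrix (Fin N) (Fin l) R,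
          (g.val : Matrix (Fin l) (Fin l) R) = 1 - B * S := by
  refine ⟨{
    carrier := {g | ∃ S : Matrix (Fin N) (Fin l) R, (g.val : _) = 1 - B * S}
    one_mem' := ⟨0, by simp⟩
    mul_mem' := ?_
    inv_mem' := ?_ }, fun g => Iff.rfl⟩
  · rintro a b ⟨S, hS⟩ ⟨T, hT⟩
    refine ⟨S + T - S * B * T, ?_⟩
    have : (a * b).val = a.val * b.val := rfl
    rw [this, hS, hT]
    simp only [Matrix.mul_sub, Matrix.sub_mul, Matrix.mul_add, Matrix.add_mul,
      Matrix.mul_one, Matrix.one_mul, Matrix.mul_assoc]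
    abel
  · rintro g ⟨S, hS⟩
    refine ⟨-(S * (g⁻¹).val), ?_⟩
    have h1 : g.val * (g⁻¹).val = 1 := g.mul_inv
    have : (g⁻¹).val = 1 + B * (S * (g⁻¹).val) := by
      have := congrArg (fun x => (1 : Matrix (Fin l) (Fin l) R) - x + B * S * (g⁻¹).val) h1
      calc (g⁻¹).val = 1 * (g⁻¹).val := (one_mul _).symm
        _ = (g.val + B * S) * (g⁻¹).val := by rw [hS]; noncomm_ring
        _ = 1 + B * (S * (g⁻¹).val) := by rw [add_mul, h1, Matrix.mul_assoc]
    rw [Matrix.mul_neg, sub_neg_eq_add]; exact this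
end

section
/- Let B be an l×N matrix and C an N×l matrix over a ring R. The set of invertible l×l matrices of the form g = 1 - BuC, where u ranges over N×N matrices, is a subgroup of GL(l, R). -/
theorem stmt13 {R : Type*} [Ring R] {l N : ℕ}
    (B : Matrix (Fin l) (Fin N) R) (C : Matrix (Fin N) (Fin l) R) :
    ∃ H : Subgroup (Matrix (Fin l) (Fin l) R)ˣ,
      ∀ g : (Matrix (Fin l) (Fin l) R)ˣ,
        g ∈ H ↔ ∃ u : Matrix (Fin N) (Fin N) R,
          (g.val : Matrix (Fin l) (Fin l) R) = 1 - B * u * C := by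
  refine ⟨{
    carrier := {g | ∃ u : Matrix (Fin N) (Fin N) R, (g.val : Matrix (Fin l) (Fin l) R) = 1 - B * u * C}
    one_mem' := ⟨0, by simp⟩
    mul_mem' := ?_
    inv_mem' := ?_ }, fun g => Iff.rfl⟩
  · rintro a b ⟨u, hu⟩ ⟨v, hv⟩
    refine ⟨u + v - u * C * B * v, ?_⟩
    show (a.val * b.val : Matrix (Fin l) (Fin l) R) = _
    rw [hu, hv]
    simp only [Matrix.mul_add, Matrix.add_mul, Matrix.mul_sub, Matrix.sub_mul,
      Matrix.mul_one, Matrix.one_mul, Matrix.mul_assoc]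
    abel
  · rintro g ⟨u, hu⟩
    set gi := (g⁻¹ : (Matrix (Fin l) (Fin l) R)ˣ).val with hgi
    have h1 : g.val * gi = 1 := g.mul_inv
    have h2 : gi * g.val = 1 := g.inv_mul
    rw [hu] at h1 h2
    rw [Matrix.sub_mul, Matrix.one_mul] at h1
    rw [Matrix.mul_sub, Matrix.mul_one] at h2
    have e1 : gi = 1 + B * u * C * gi := sub_eq_iff_eq_add.mp h1
    have e2 : gi = 1 + gi * (B * u * C) := sub_eq_iff_eq_add.mp h2
    refine ⟨-(u + u * C * gi * B * u), ?_⟩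
    show gi = _
    calc gi = 1 + B * u * C * gi := e1
      _ = 1 + B * u * C * (1 + gi * (B * u * C)) := by rw [← e2]
      _ = 1 - B * -(u + u * C * gi * B * u) * C := by
          simp only [Matrix.mul_add, Matrix.add_mul, Matrix.mul_sub, Matrix.sub_mul,
            Matrix.neg_mul, Matrix.mul_neg, Matrix.mul_one, Matrix.one_mul, Matrix.mul_assoc]
          abel
end

section
/- Every submodule L of the free module (Z/p^μ)^k is the kernel of some module endomorphism (Z/p^μ)^k → (Z/p^μ)^k. -/
/-!
Let `M = (ZMod N)^k`. The quotient `M ⧸ L` is a finite abelian group generated by `k` elements,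
so by the Smith normal form over `ℤ` it is a product `∏_{i < k} ZMod dᵢ`; since `N` kills it,
every `dᵢ` divides `N`, and `ZMod dᵢ` embeds into `ZMod N`. Hence `M ⧸ L` embeds into `M`, and
the composite `M → M ⧸ L ↪ M` (automatically `ZMod N`-linear) has kernel `L`.
-/

open Function

namespace ZMod

theorem exists_addMonoidHom_injective_of_dvd {d N : ℕ} (hN : N ≠ 0) (hd : d ∣ N) :
    ∃ f : ZMod d →+ ZMod N, Injective f := by
  obtain ⟨e, rfl⟩ := hd
  have he : (e : ℤ) ≠ 0 := by exact_mod_cast right_ne_zero_of_mul hN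
  -- `1` goes to `e`, whose additive order in `ZMod (d * e)` is exactly `d`.
  refine ⟨lift d ⟨zmultiplesHom _ (e : ZMod (d * e)), ?_⟩, (lift_injective d).mpr fun m hm => ?_⟩
  · simp [← Nat.cast_mul]
  · simp only [zmultiplesHom_apply, zsmul_eq_mul] at hm
    rw [← Int.cast_natCast, ← Int.cast_mul, intCast_zmod_eq_zero_iff_dvd, Nat.cast_mul] at hm
    rw [intCast_zmod_eq_zero_iff_dvd]
    exact Int.dvd_of_mul_dvd_mul_right he hm

end ZMod

theorem AddCommGroup.exists_addEquiv_pi_zmod_of_surjective {ι Q : Type*} [Finite ι]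
    [AddCommGroup Q] [Finite Q] (φ : (ι → ℤ) →+ Q) (hφ : Surjective φ) :
    ∃ d : ι → ℕ, Nonempty (Q ≃+ ∀ i, ZMod (d i)) := by
  set K := LinearMap.ker φ.toIntLinearMap
  let e := φ.toIntLinearMap.quotKerEquivOfSurjective hφ
  have : Finite ((ι → ℤ) ⧸ K) := Finite.of_equiv _ e.symm.toEquiv
  have hK := (K.finiteQuotient_iff).mp this
  exact ⟨_, ⟨e.symm.toAddEquiv.trans (K.quotientEquivPiZMod (Pi.basisFun ℤ ι) hK)⟩⟩

theorem AddCommGroup.exists_addMonoidHom_pi_zmod_injective {ι Q : Type*} [Finite ι]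
    [AddCommGroup Q] [Finite Q] {N : ℕ} (hN : N ≠ 0) (hQ : ∀ x : Q, N • x = 0)
    (φ : (ι → ℤ) →+ Q) (hφ : Surjective φ) : ∃ g : Q →+ (ι → ZMod N), Injective g := by
  classical
  obtain ⟨d, ⟨e⟩⟩ := exists_addEquiv_pi_zmod_of_surjective φ hφ
  have hd (i : ι) : d i ∣ N := by
    have := congrArg (· i) (congrArg e (hQ (e.symm (Pi.single i 1))))
    simpa [ZMod.natCast_eq_zero_iff] using this
  choose j hj using fun i => ZMod.exists_addMonoidHom_injective_of_dvd hN (hd i)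
  exact ⟨(AddMonoidHom.piMap j).comp e.toAddMonoidHom, (Injective.piMap hj).comp e.injective⟩

theorem Submodule.exists_ker_eq_pi_zmod {ι : Type*} [Finite ι] {N : ℕ} (hN : N ≠ 0)
    (L : Submodule (ZMod N) (ι → ZMod N)) :
    ∃ f : (ι → ZMod N) →ₗ[ZMod N] (ι → ZMod N), LinearMap.ker f = L := by
  have : NeZero N := ⟨hN⟩
  have : Finite ((ι → ZMod N) ⧸ L) := Finite.of_surjective _ L.mkQ_surjective
  have hQ (x : (ι → ZMod N) ⧸ L) : N • x = 0 := by
    rw [← Nat.cast_smul_eq_nsmul (ZMod N), ZMod.natCast_self, zero_smul]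
  let φ := L.mkQ.toAddMonoidHom.comp ((Int.castAddHom (ZMod N)).compLeft ι)
  have hφ : Surjective φ := L.mkQ_surjective.comp ZMod.intCast_surjective.comp_left
  obtain ⟨g, hg⟩ := AddCommGroup.exists_addMonoidHom_pi_zmod_injective hN hQ φ hφ
  refine ⟨(g.toZModLinearMap N).comp L.mkQ, ?_⟩
  rw [LinearMap.ker_comp_of_ker_eq_bot _ (LinearMap.ker_eq_bot.mpr hg), Submodule.ker_mkQ]

theorem stmt17_general {p : ℕ} (hp : p.Prime) {μ : ℕ} {k : ℕ}
    (L : Submodule (ZMod (p ^ μ)) (Fin k → ZMod (p ^ μ))) :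
    ∃ f : (Fin k → ZMod (p ^ μ)) →ₗ[ZMod (p ^ μ)] (Fin k → ZMod (p ^ μ)),
      LinearMap.ker f = L :=
  L.exists_ker_eq_pi_zmod (pow_ne_zero μ hp.ne_zero)

theorem stmt17 {p : ℕ} (hp : p.Prime) {μ : ℕ} (hμ : 1 ≤ μ) {k : ℕ}
    (L : Submodule (ZMod (p ^ μ)) (Fin k → ZMod (p ^ μ))) :
    ∃ f : (Fin k → ZMod (p ^ μ)) →ₗ[ZMod (p ^ μ)] (Fin k → ZMod (p ^ μ)),
      LinearMap.ker f = L :=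
  stmt17_general hp L
end
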